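/- arXiv:2603.23832 — 3 statements merged into one kernel-verified Lean document; each statement's English description precedes it below -/
import Mathlib

section
/- For measurable sets A, B ⊆ ℝ^d of finite measure, the operator S_{A,B} - S_{A,B}² equals T*T where T = P_{Aᶜ} ∘ Q_B ∘ P_A, with Q_B = F⁻¹ ∘ P_B ∘ F. Consequently S_{A,B} - S_{A,B}² is a non-negative self-adjoint operator. -/
open MeasureTheory Complex Filter Topology Set
open scoped ENNReal

set_option maxHeartbeats 1000000
noncomputable section

abbrev Ed (d : ℕ) := EuclideanSpace ℝ (Fin d)
abbrev L2 (d : ℕ) := MeasureTheory.Lp ℂ 2 (volume : Measure (Ed d))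

section aux
variable {d : ℕ}

lemma aux_idem (P : Set (Ed d) → (L2 d →L[ℂ] L2 d))
    (hP : ∀ (X : Set (Ed d)) (f : L2 d), (P X f : Ed d → ℂ) =ᵐ[volume] X.indicator f)
    (X : Set (Ed d)) : P X ∘L P X = P X := by
  ext f
  rw [ContinuousLinearMap.comp_apply]
  filter_upwards [hP X (P X f), hP X f] with a h1 h2
  rw [h1]
  by_cases ha : a ∈ X
  · simp [Set.indicator_of_mem ha]
  · simp [Set.indicator_of_notMem ha, h2, ha]

lemma aux_idem' (P : Set (Ed d) → (L2 d →L[ℂ] L2 d))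
    (hP : ∀ (X : Set (Ed d)) (f : L2 d), (P X f : Ed d → ℂ) =ᵐ[volume] X.indicator f)
    (X : Set (Ed d)) : P X * P X = P X := aux_idem P hP X

lemma aux_adj (P : Set (Ed d) → (L2 d →L[ℂ] L2 d))
    (hP : ∀ (X : Set (Ed d)) (f : L2 d), (P X f : Ed d → ℂ) =ᵐ[volume] X.indicator f)
    (X : Set (Ed d)) : ContinuousLinearMap.adjoint (P X) = P X := by
  symm
  rw [ContinuousLinearMap.eq_adjoint_iff]
  intro f g
  rw [L2.inner_def, L2.inner_def]
  refine integral_congr_ae ?_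
  filter_upwards [hP X f, hP X g] with a ha hb
  rw [ha, hb]
  simp only [Set.indicator]
  split <;> simp

lemma aux_compl (P : Set (Ed d) → (L2 d →L[ℂ] L2 d))
    (hP : ∀ (X : Set (Ed d)) (f : L2 d), (P X f : Ed d → ℂ) =ᵐ[volume] X.indicator f)
    (A : Set (Ed d)) : P Aᶜ = 1 - P A := by
  ext f
  have h1 : ((1 - P A) f : Ed d → ℂ) =ᵐ[volume] (f : Ed d → ℂ) - (P A f : Ed d → ℂ) := by
    simp only [ContinuousLinearMap.sub_apply, ContinuousLinearMap.one_apply]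
    exact Lp.coeFn_sub _ _
  filter_upwards [hP Aᶜ f, hP A f, h1] with a h2 h3 h4
  rw [h2, h4, Pi.sub_apply, h3]
  by_cases ha : a ∈ A <;> simp [Set.indicator, ha]

lemma aux_Fadj (F : L2 d ≃ₗᵢ[ℂ] L2 d) :
    ContinuousLinearMap.adjoint (↑F.toContinuousLinearEquiv : L2 d →L[ℂ] L2 d) =
      ↑F.symm.toContinuousLinearEquiv := by
  symm
  rw [ContinuousLinearMap.eq_adjoint_iff]
  intro f g
  simp only [ContinuousLinearEquiv.coe_coe, LinearIsometryEquiv.coe_toContinuousLinearEquiv]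
  rw [← LinearIsometryEquiv.inner_map_map F (F.symm f) g, F.apply_symm_apply]

lemma ring_aux {R : Type*} [Ring R] (p q : R) (hp : p*p = p) (hq : q*q = q) :
    p*(q*p) - p*(q*p)*(p*(q*p)) = (p*(q*(1-p))) * ((1-p)*(q*p)) := by
  have e : (1 - p) * (1 - p) = 1 - p := by
    rw [mul_sub, sub_mul, sub_mul, hp]
    simp only [one_mul, mul_one]
    abel
  calc p*(q*p) - p*(q*p)*(p*(q*p))
      = p*(q*p) - p*q*((p*p)*(q*p)) := by noncomm_ring
    _ = p*(q*q)*p - p*q*(p*(q*p)) := by rw [hp, hq]; noncomm_ring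
    _ = p*q*((1-p)*(q*p)) := by noncomm_ring
    _ = p*q*(((1-p)*(1-p))*(q*p)) := by rw [e]
    _ = (p*(q*(1-p))) * ((1-p)*(q*p)) := by noncomm_ring

end aux

/-- The `S - S²` trick: for measurable sets `A, B ⊆ ℝ^d` of finite measure, with
`S_{A,B} = P_A Q_B P_A` and `T = P_{Aᶜ} Q_B P_A` (where `Q_B = F⁻¹ P_B F`), we have
`S_{A,B} - S_{A,B}² = T* T`; consequently `S_{A,B} - S_{A,B}²` is a non-negative
self-adjoint operator. -/
theorem S_sub_S_sq_eq_adjoint_mul (d : ℕ)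
    (P : Set (Ed d) → (L2 d →L[ℂ] L2 d))
    (hP : ∀ (X : Set (Ed d)) (f : L2 d), (P X f : Ed d → ℂ) =ᵐ[volume] X.indicator f)
    (F : L2 d ≃ₗᵢ[ℂ] L2 d)
    (hF : ∀ f : L2 d, Integrable f volume →
      (F f : Ed d → ℂ) =ᵐ[volume] VectorFourier.fourierIntegral Real.fourierChar volume (innerₗ (Ed d))
        (f : Ed d → ℂ))
    (A B : Set (Ed d)) (hAm : MeasurableSet A) (hBm : MeasurableSet B)
    (hA : volume A < ⊤) (hB : volume B < ⊤) :
    letI Q : Set (Ed d) → (L2 d →L[ℂ] L2 d) := fun X =>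
      ↑F.symm.toContinuousLinearEquiv ∘L P X ∘L ↑F.toContinuousLinearEquiv
    letI S : L2 d →L[ℂ] L2 d := P A ∘L Q B ∘L P A
    letI T : L2 d →L[ℂ] L2 d := P Aᶜ ∘L Q B ∘L P A
    S - S ∘L S = ContinuousLinearMap.adjoint T ∘L T ∧ (S - S ∘L S).IsPositive := by
  beta_reduce
  set QB : L2 d →L[ℂ] L2 d :=
    ↑F.symm.toContinuousLinearEquiv ∘L P B ∘L ↑F.toContinuousLinearEquiv with hQBdef
  have hPBB := aux_idem P hP B
  have hQQ : QB ∘L QB = QB := by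
    ext f
    simp only [hQBdef, ContinuousLinearMap.comp_apply, ContinuousLinearEquiv.coe_coe,
      LinearIsometryEquiv.coe_toContinuousLinearEquiv, LinearIsometryEquiv.apply_symm_apply]
    rw [← ContinuousLinearMap.comp_apply (P B) (P B), hPBB]
  have hQadj : ContinuousLinearMap.adjoint QB = QB := by
    rw [hQBdef, ContinuousLinearMap.adjoint_comp, ContinuousLinearMap.adjoint_comp,
      aux_adj P hP, aux_Fadj F]
    have h2 : ContinuousLinearMap.adjoint
        ((↑F.symm.toContinuousLinearEquiv : L2 d →L[ℂ] L2 d)) =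
        (↑F.toContinuousLinearEquiv : L2 d →L[ℂ] L2 d) := by
      have := aux_Fadj F.symm
      simpa using this
    rw [h2, ContinuousLinearMap.comp_assoc]
  have hTadj : ContinuousLinearMap.adjoint (P Aᶜ ∘L QB ∘L P A) = P A ∘L QB ∘L P Aᶜ := by
    simp only [ContinuousLinearMap.adjoint_comp, aux_adj P hP, hQadj,
      ContinuousLinearMap.comp_assoc]
  have key : (P A ∘L QB ∘L P A) - (P A ∘L QB ∘L P A) ∘L (P A ∘L QB ∘L P A)
      = ContinuousLinearMap.adjoint (P Aᶜ ∘L QB ∘L P A) ∘L (P Aᶜ ∘L QB ∘L P A) := by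
    rw [hTadj]
    rw [aux_compl P hP A]
    simp only [← ContinuousLinearMap.mul_def]
    rw [← ContinuousLinearMap.mul_def] at hQQ
    exact ring_aux (P A) QB (aux_idem' P hP A) hQQ
  refine ⟨key, ?_⟩
  rw [key]
  have h : (ContinuousLinearMap.adjoint (P Aᶜ ∘L QB ∘L P A) ∘L
      (1 : L2 d →L[ℂ] L2 d) ∘L (P Aᶜ ∘L QB ∘L P A)).IsPositive :=
    (ContinuousLinearMap.isPositive_one (𝕜 := ℂ) (E := L2 d)).adjoint_conj _
  rwa [show ((1 : L2 d →L[ℂ] L2 d).comp (P Aᶜ ∘L QB ∘L P A)) = P Aᶜ ∘L QB ∘L P A from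
    ContinuousLinearMap.id_comp _] at h
end
end

section
/- Let A, B ⊆ ℝ^d be sets of finite measure and M an invertible d×d real matrix. Then for all vectors u, v ∈ ℝ^d and all n ∈ ℕ, the n-th eigenvalue of S_{A,B} equals the n-th eigenvalue of S_{MA+v, M^{-T}B+u}, i.e. λ_n(A,B) = λ_n(MA+v, M^{-T}B+u). -/
open MeasureTheory Complex Filter Topology Set Matrix
open scoped ENNReal

noncomputable section

/-- `l` is the non-increasing sequence of eigenvalues (counted with multiplicity,
padded with zeros) of the non-negative compact operator `T`. -/
def IsEigenSeq {H : Type*} [NormedAddCommGroup H] [InnerProductSpace ℂ H]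
    (T : H →L[ℂ] H) (l : ℕ → ℝ) : Prop :=
  Antitone l ∧ (∀ n, 0 ≤ l n) ∧ Filter.Tendsto l Filter.atTop (nhds 0) ∧
  ∀ μ : ℝ, 0 < μ →
    Nat.card {n : ℕ // l n = μ} =
      Module.finrank ℂ ↥(Module.End.eigenspace (T : H →ₗ[ℂ] H) (μ : ℂ))

section Aux

open FourierTransform
open scoped RealInnerProductSpace


lemma seq_not_lt (l l' : ℕ → ℝ) (hl : Antitone l) (hl' : Antitone l')
    (h0 : ∀ n, 0 ≤ l' n) (htl : Filter.Tendsto l Filter.atTop (nhds 0))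
    (hcard : ∀ μ : ℝ, 0 < μ →
      Nat.card {n : ℕ // l n = μ} = Nat.card {n : ℕ // l' n = μ})
    (n : ℕ) (hprev : ∀ k < n, l k = l' k) : ¬ l' n < l n := by
  intro hlt
  set μ := l n with hμdef
  have hμpos : 0 < μ := lt_of_le_of_lt (h0 n) hlt
  set S : Set ℕ := {k | l k = μ} with hS
  set S' : Set ℕ := {k | l' k = μ} with hS'
  have hSfin : S.Finite := by
    obtain ⟨N, hN⟩ := (Filter.tendsto_atTop'.mp htl (Set.Iio μ) (Iio_mem_nhds hμpos))
    refine Set.Finite.subset (Set.finite_Iio N) ?_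
    intro k hk
    by_contra hkN
    exact absurd (hk : l k = μ) (ne_of_lt (hN k (le_of_not_gt hkN)))
  have hsub : S' ⊆ S := by
    intro k hk
    have hkn : k < n := by
      by_contra hkn
      have : l' k ≤ l' n := hl' (le_of_not_gt hkn)
      have : l' k < μ := lt_of_le_of_lt this hlt
      exact absurd (hk : l' k = μ) (ne_of_lt this)
    have hk' : l' k = μ := hk
    simpa [hS, hprev k hkn] using hk'
  have hnS : n ∈ S := rfl
  have hnS' : n ∉ S' := fun h => absurd (h : l' n = μ) (ne_of_lt hlt)
  have hss : S' ⊂ S := ⟨hsub, fun h => hnS' (h hnS)⟩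
  have hlt' : S'.ncard < S.ncard := Set.ncard_lt_ncard hss hSfin
  have : Nat.card {k : ℕ // l k = μ} = Nat.card {k : ℕ // l' k = μ} := hcard μ hμpos
  have e1 : Nat.card {k : ℕ // l k = μ} = S.ncard := (Nat.card_coe_set_eq S).symm ▸ rfl
  have e2 : Nat.card {k : ℕ // l' k = μ} = S'.ncard := rfl
  omega

lemma seq_unique (l l' : ℕ → ℝ) (hl : Antitone l) (hl' : Antitone l')
    (h0 : ∀ n, 0 ≤ l n) (h0' : ∀ n, 0 ≤ l' n)
    (htl : Filter.Tendsto l Filter.atTop (nhds 0))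
    (htl' : Filter.Tendsto l' Filter.atTop (nhds 0))
    (hcard : ∀ μ : ℝ, 0 < μ →
      Nat.card {n : ℕ // l n = μ} = Nat.card {n : ℕ // l' n = μ}) :
    ∀ n, l n = l' n := by
  intro n
  induction n using Nat.strong_induction_on with
  | _ n ih =>
    rcases lt_trichotomy (l n) (l' n) with h | h | h
    · exact absurd h (seq_not_lt l' l hl' hl h0 htl'
        (fun μ hμ => (hcard μ hμ).symm) n (fun k hk => (ih k hk).symm))
    · exact h
    · exact absurd h (seq_not_lt l l' hl hl' h0' htl hcard n ih)


namespace AffInv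

variable {d : ℕ}

/-- Weighted composition. -/
def wfun (g : Ed d → ℂ) (ψ : Ed d → Ed d) (f : Ed d → ℂ) : Ed d → ℂ :=
  fun x => g x * f (ψ x)

variable {g : Ed d → ℂ} {ψ : Ed d → Ed d} {c : ℝ≥0∞}

lemma qmp (hψ : Measurable ψ)
    (hmap : Measure.map ψ (volume : Measure (Ed d)) = c • volume) :
    Measure.QuasiMeasurePreserving ψ (volume : Measure (Ed d)) volume :=
  ⟨hψ, hmap ▸ Measure.smul_absolutelyContinuous⟩

lemma lint_comp (hψ : Measurable ψ)
    (hmap : Measure.map ψ (volume : Measure (Ed d)) = c • volume)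
    {h : Ed d → ℝ≥0∞} (hh : AEMeasurable h (volume : Measure (Ed d))) :
    ∫⁻ x, h (ψ x) = c * ∫⁻ x, h x := by
  rw [← smul_eq_mul, ← lintegral_smul_measure, ← hmap,
    lintegral_map' (hh.mono_ac (hmap ▸ Measure.smul_absolutelyContinuous)) hψ.aemeasurable]

lemma nnnorm_wfun (hg1 : ∀ x, ‖g x‖ = 1) (f : Ed d → ℂ) (x : Ed d) :
    ‖wfun g ψ f x‖₊ = ‖f (ψ x)‖₊ := by
  have h1 : ‖g x‖₊ = 1 := NNReal.eq (by simp [hg1 x])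
  simp [wfun, nnnorm_mul, h1]

lemma lint_wfun (hg1 : ∀ x, ‖g x‖ = 1) (hψ : Measurable ψ)
    (hmap : Measure.map ψ (volume : Measure (Ed d)) = c • volume)
    (f : L2 d) :
    ∫⁻ x, (‖wfun g ψ (f : Ed d → ℂ) x‖₊ : ℝ≥0∞) ^ (2:ℝ)
      = c * ∫⁻ x, (‖(f : Ed d → ℂ) x‖₊ : ℝ≥0∞) ^ (2:ℝ) := by
  have hfm : StronglyMeasurable (f : Ed d → ℂ) := Lp.stronglyMeasurable f
  rw [← lint_comp hψ hmap
    ((hfm.measurable.nnnorm.coe_nnreal_ennreal).aemeasurable.pow_const _)]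
  exact lintegral_congr fun x => by rw [nnnorm_wfun hg1]

lemma eLpNorm_wfun (hg1 : ∀ x, ‖g x‖ = 1) (hψ : Measurable ψ)
    (hmap : Measure.map ψ (volume : Measure (Ed d)) = c • volume)
    (f : L2 d) :
    eLpNorm (wfun g ψ (f : Ed d → ℂ)) 2 volume
      = c ^ (1/(2:ℝ)) * eLpNorm (f : Ed d → ℂ) 2 volume := by
  rw [eLpNorm_eq_lintegral_rpow_enorm_toReal (by norm_num) (by norm_num),
    eLpNorm_eq_lintegral_rpow_enorm_toReal (by norm_num) (by norm_num)]
  simp only [enorm_eq_nnnorm]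
  have : (2:ℝ≥0∞).toReal = (2:ℝ) := by norm_num
  rw [this, lint_wfun hg1 hψ hmap f,
    ENNReal.mul_rpow_of_nonneg _ _ (by norm_num)]

lemma memL2_wfun (hg : Measurable g) (hg1 : ∀ x, ‖g x‖ = 1) (hψ : Measurable ψ)
    (hctop : c ≠ ⊤)
    (hmap : Measure.map ψ (volume : Measure (Ed d)) = c • volume)
    (f : L2 d) : MemLp (wfun g ψ (f : Ed d → ℂ)) 2 (volume : Measure (Ed d)) := by
  have hfm : StronglyMeasurable (f : Ed d → ℂ) := Lp.stronglyMeasurable f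
  refine ⟨((hg.stronglyMeasurable).aestronglyMeasurable).mul
      ((hfm.comp_measurable hψ).aestronglyMeasurable), ?_⟩
  rw [eLpNorm_wfun hg1 hψ hmap f]
  exact ENNReal.mul_lt_top
    (ENNReal.rpow_lt_top_of_nonneg (by norm_num) hctop) (Lp.memLp f).2

/-- The weighted composition operator on `L²`. -/
def W (hg : Measurable g) (hg1 : ∀ x, ‖g x‖ = 1) (hψ : Measurable ψ)
    (hctop : c ≠ ⊤)
    (hmap : Measure.map ψ (volume : Measure (Ed d)) = c • volume) :
    L2 d →L[ℂ] L2 d := by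
  refine LinearMap.mkContinuous
    { toFun := fun f => (memL2_wfun hg hg1 hψ hctop hmap f).toLp _
      map_add' := ?_
      map_smul' := ?_ } ((c ^ (1/(2:ℝ))).toReal) ?_
  · intro f₁ f₂
    apply Lp.ext
    refine ((memL2_wfun hg hg1 hψ hctop hmap _).coeFn_toLp).trans ?_
    refine .trans ?_ (Lp.coeFn_add _ _).symm
    have h1 := (qmp hψ hmap).ae_eq (Lp.coeFn_add f₁ f₂)
    have h2 := (memL2_wfun hg hg1 hψ hctop hmap f₁).coeFn_toLp
    have h3 := (memL2_wfun hg hg1 hψ hctop hmap f₂).coeFn_toLp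
    filter_upwards [h1, h2.symm, h3.symm] with x hx1 hx2 hx3
    simp only [wfun, Function.comp_apply, Pi.add_apply] at hx1 hx2 hx3 ⊢
    rw [hx1, mul_add, hx2, hx3]
  · intro a f
    apply Lp.ext
    refine ((memL2_wfun hg hg1 hψ hctop hmap _).coeFn_toLp).trans ?_
    refine .trans ?_ (Lp.coeFn_smul _ _).symm
    have h1 := (qmp hψ hmap).ae_eq (Lp.coeFn_smul a f)
    have h2 := (memL2_wfun hg hg1 hψ hctop hmap f).coeFn_toLp
    filter_upwards [h1, h2.symm] with x hx1 hx2
    simp only [wfun, Function.comp_apply, Pi.smul_apply, smul_eq_mul,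
      RingHom.id_apply] at hx1 hx2 ⊢
    rw [hx1, ← hx2]; ring
  · intro f
    simp only [LinearMap.coe_mk, AddHom.coe_mk]
    rw [Lp.norm_toLp, eLpNorm_wfun hg1 hψ hmap f, ENNReal.toReal_mul, Lp.norm_def]

variable (hg : Measurable g) (hg1 : ∀ x, ‖g x‖ = 1) (hψ : Measurable ψ)
  (hctop : c ≠ ⊤) (hmap : Measure.map ψ (volume : Measure (Ed d)) = c • volume)

lemma W_coe (f : L2 d) :
    (W hg hg1 hψ hctop hmap f : Ed d → ℂ) =ᵐ[volume] wfun g ψ (f : Ed d → ℂ) :=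
  (memL2_wfun hg hg1 hψ hctop hmap f).coeFn_toLp


lemma W_comm_P (P : Set (Ed d) → (L2 d →L[ℂ] L2 d))
    (hP : ∀ (X : Set (Ed d)) (f : L2 d), (P X f : Ed d → ℂ) =ᵐ[volume] X.indicator f)
    (X X' : Set (Ed d)) (hXX' : ∀ x, x ∈ X' ↔ ψ x ∈ X) (f : L2 d) :
    P X' (W hg hg1 hψ hctop hmap f) = W hg hg1 hψ hctop hmap (P X f) := by
  apply Lp.ext
  have h1 := hP X' (W hg hg1 hψ hctop hmap f)
  have h2 := W_coe hg hg1 hψ hctop hmap f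
  have h3 := W_coe hg hg1 hψ hctop hmap (P X f)
  have h4 := (qmp hψ hmap).ae_eq (hP X f)
  filter_upwards [h1, h2, h3, h4] with x hx1 hx2 hx3 hx4
  rw [hx1, hx3]
  simp only [Function.comp_apply] at hx4
  by_cases hx : x ∈ X'
  · rw [Set.indicator_of_mem hx]
    rw [hx2, wfun, wfun, hx4, Set.indicator_of_mem ((hXX' x).mp hx)]
  · rw [Set.indicator_of_notMem hx, wfun, hx4,
      Set.indicator_of_notMem (fun h => hx ((hXX' x).mpr h)), mul_zero]

lemma W_comp {g' : Ed d → ℂ} {ψ' : Ed d → Ed d} {c' : ℝ≥0∞}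
    (hg' : Measurable g') (hg1' : ∀ x, ‖g' x‖ = 1) (hψ' : Measurable ψ')
    (hctop' : c' ≠ ⊤)
    (hmap' : Measure.map ψ' (volume : Measure (Ed d)) = c' • volume)
    (hinv : ∀ x, ψ' (ψ x) = x) (hgg : ∀ x, g x * g' (ψ x) = 1) (f : L2 d) :
    W hg hg1 hψ hctop hmap (W hg' hg1' hψ' hctop' hmap' f) = f := by
  apply Lp.ext
  have h1 := W_coe hg hg1 hψ hctop hmap (W hg' hg1' hψ' hctop' hmap' f)
  have h2 := (qmp hψ hmap).ae_eq (W_coe hg' hg1' hψ' hctop' hmap' f)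
  filter_upwards [h1, h2] with x hx1 hx2
  simp only [Function.comp_apply] at hx2
  rw [hx1, wfun, hx2, wfun, hinv x, ← mul_assoc, hgg x, one_mul]


section Matrices

variable {d : ℕ}

lemma det_toEuclideanLin (N : Matrix (Fin d) (Fin d) ℝ) :
    LinearMap.det (Matrix.toEuclideanLin N) = N.det := by
  rw [Matrix.toEuclideanLin_eq_toLin, LinearMap.det_toLin]

lemma map_toEuclideanCLM (N : Matrix (Fin d) (Fin d) ℝ) (hN : N.det ≠ 0) :
    Measure.map (⇑(Matrix.toEuclideanCLM (𝕜 := ℝ) N)) (volume : Measure (Ed d))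
      = ENNReal.ofReal |N.det|⁻¹ • volume := by
  have hc : ⇑(Matrix.toEuclideanCLM (𝕜 := ℝ) N) = ⇑(Matrix.toEuclideanLin N) := by
    rw [← Matrix.coe_toEuclideanCLM_eq_toEuclideanLin]; rfl
  have hdet : LinearMap.det (Matrix.toEuclideanLin N) ≠ 0 := by
    rw [det_toEuclideanLin]; exact hN
  have := Measure.map_linearMap_addHaar_eq_smul_addHaar
    (volume : Measure (Ed d)) hdet
  rw [hc]
  rw [this, det_toEuclideanLin, abs_inv]

lemma map_affine_sub (N : Matrix (Fin d) (Fin d) ℝ) (hN : N.det ≠ 0) (w : Ed d) :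
    Measure.map (fun x => Matrix.toEuclideanCLM (𝕜 := ℝ) N (x - w))
        (volume : Measure (Ed d))
      = ENNReal.ofReal |N.det|⁻¹ • volume := by
  have h1 : (fun x : Ed d => Matrix.toEuclideanCLM (𝕜 := ℝ) N (x - w))
      = (⇑(Matrix.toEuclideanCLM (𝕜 := ℝ) N)) ∘ (fun x => x + (-w)) := by
    funext x; simp [sub_eq_add_neg]
  rw [h1, ← Measure.map_map (Matrix.toEuclideanCLM (𝕜 := ℝ) N).continuous.measurable
    (measurable_add_const (-w)), map_add_right_eq_self, map_toEuclideanCLM N hN]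

lemma map_affine_add (N : Matrix (Fin d) (Fin d) ℝ) (hN : N.det ≠ 0) (w : Ed d) :
    Measure.map (fun x => Matrix.toEuclideanCLM (𝕜 := ℝ) N x + w)
        (volume : Measure (Ed d))
      = ENNReal.ofReal |N.det|⁻¹ • volume := by
  have h1 : (fun x : Ed d => Matrix.toEuclideanCLM (𝕜 := ℝ) N x + w)
      = (fun x => x + w) ∘ (⇑(Matrix.toEuclideanCLM (𝕜 := ℝ) N)) := rfl
  rw [h1, ← Measure.map_map (measurable_add_const w)
    (Matrix.toEuclideanCLM (𝕜 := ℝ) N).continuous.measurable,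
    map_toEuclideanCLM N hN, Measure.map_smul, map_add_right_eq_self]

lemma inner_toEuclideanCLM (N : Matrix (Fin d) (Fin d) ℝ) (y w : Ed d) :
    ⟪Matrix.toEuclideanCLM (𝕜 := ℝ) N y, w⟫
      = ⟪y, Matrix.toEuclideanCLM (𝕜 := ℝ) Nᵀ w⟫ := by
  have hc : ∀ (K : Matrix (Fin d) (Fin d) ℝ) (z : Ed d),
      Matrix.toEuclideanCLM (𝕜 := ℝ) K z = Matrix.toEuclideanLin K z := fun K z => by
    rw [← Matrix.coe_toEuclideanCLM_eq_toEuclideanLin]; rfl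
  rw [hc, hc]
  have : (Matrix.toEuclideanLin Nᵀ : Ed d →ₗ[ℝ] Ed d)
      = LinearMap.adjoint (Matrix.toEuclideanLin N) := by
    rw [← Matrix.toEuclideanLin_conjTranspose_eq_adjoint,
      Matrix.conjTranspose_eq_transpose_of_trivial]
  rw [this, LinearMap.adjoint_inner_right]

end Matrices

section Main

variable {d : ℕ} (M : Matrix (Fin d) (Fin d) ℝ) (u v : Ed d)

/-- The affine map `x ↦ Mx + v`. -/
def phim : Ed d → Ed d := fun x => Matrix.toEuclideanCLM (𝕜 := ℝ) M x + v

/-- Its inverse `x ↦ M⁻¹(x - v)`. -/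
def psim : Ed d → Ed d := fun x => Matrix.toEuclideanCLM (𝕜 := ℝ) M⁻¹ (x - v)

/-- Modulation character. -/
def guf : Ed d → ℂ := fun x => 𝐞 ⟪u, x⟫

/-- Inverse modulation character. -/
def guf' : Ed d → ℂ := fun x => star (guf u (phim M v x))

lemma measurable_phim : Measurable (phim M v) :=
  ((Matrix.toEuclideanCLM (𝕜 := ℝ) M).continuous.measurable).add_const v

lemma measurable_psim : Measurable (psim M v) :=
  (Matrix.toEuclideanCLM (𝕜 := ℝ) M⁻¹).continuous.measurable.comp
    (measurable_id.sub_const v)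

lemma continuous_guf : Continuous (guf (d := d) u) :=
  continuous_subtype_val.comp
    (Real.continuous_fourierChar.comp (continuous_const.inner continuous_id))

lemma measurable_guf : Measurable (guf (d := d) u) := (continuous_guf u).measurable

lemma norm_guf : ∀ x, ‖guf (d := d) u x‖ = 1 := fun x => by
  simp [guf, Circle.norm_coe]

lemma measurable_guf' : Measurable (guf' M u v) :=
  continuous_star.measurable.comp ((measurable_guf u).comp ((measurable_phim M v)))

lemma norm_guf' : ∀ x, ‖guf' M u v x‖ = 1 := fun x => by
  rw [guf', norm_star]; exact norm_guf u _

lemma star_mul_self_of_norm_one {z : ℂ} (hz : ‖z‖ = 1) : star z * z = 1 := by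
  rw [Complex.star_def, ← Complex.normSq_eq_conj_mul_self]
  rw [Complex.normSq_eq_norm_sq]
  rw [hz]
  norm_num

variable {M}

lemma det_ne (hM : IsUnit M.det) : M.det ≠ 0 := by
  intro h; rw [h] at hM; simpa using hM

lemma cdet_ne_top : (ENNReal.ofReal |M.det| : ℝ≥0∞) ≠ ⊤ := ENNReal.ofReal_ne_top

lemma cdetinv_ne_top : (ENNReal.ofReal |M.det|⁻¹ : ℝ≥0∞) ≠ ⊤ := ENNReal.ofReal_ne_top

variable (hM : IsUnit M.det)
include hM

lemma psim_phim : ∀ x, psim M v (phim M v x) = x := by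
  intro x
  simp only [psim, phim, add_sub_cancel_right]
  rw [← ContinuousLinearMap.mul_apply, ← _root_.map_mul, Matrix.nonsing_inv_mul M hM]
  simp [_root_.map_one]

lemma phim_psim : ∀ x, phim M v (psim M v x) = x := by
  intro x
  simp only [psim, phim]
  rw [← ContinuousLinearMap.mul_apply, ← _root_.map_mul, Matrix.mul_nonsing_inv M hM]
  simp [_root_.map_one]

lemma map_psim : Measure.map (psim M v) (volume : Measure (Ed d))
    = ENNReal.ofReal |M.det| • volume := by
  unfold psim
  have h := map_affine_sub (d := d) M⁻¹ (by
    rw [Matrix.det_nonsing_inv, Ring.inverse_eq_inv']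
    exact inv_ne_zero (det_ne hM)) v
  rw [h, Matrix.det_nonsing_inv, Ring.inverse_eq_inv', abs_inv, inv_inv]

lemma map_phim : Measure.map (phim M v) (volume : Measure (Ed d))
    = ENNReal.ofReal |M.det|⁻¹ • volume := by
  unfold phim
  exact map_affine_add M (det_ne hM) v

/-- The unitary-type operator `U f = e^{2πi⟨u,·⟩} f(M⁻¹(· - v))`. -/
def Uop : L2 d →L[ℂ] L2 d :=
  W (measurable_guf u) (norm_guf u) (measurable_psim M v) (cdet_ne_top (M := M))
    (map_psim v hM)


/-- The inverse of `Uop`. -/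
def Uop' : L2 d →L[ℂ] L2 d :=
  W (measurable_guf' M u v) (norm_guf' M u v) (measurable_phim M v)
    (cdetinv_ne_top (M := M)) (map_phim v hM)

lemma Uop_coe (f : L2 d) :
    ((Uop u v hM f : L2 d) : Ed d → ℂ)
      =ᵐ[volume] wfun (guf u) (psim M v) (f : Ed d → ℂ) :=
  W_coe _ _ _ _ _ f

lemma Uop'_Uop (f : L2 d) : Uop' u v hM (Uop u v hM f) = f := by
  refine W_comp _ _ _ _ _ _ _ _ _ _ (psim_phim v hM) (fun x => ?_) f
  rw [guf']
  exact star_mul_self_of_norm_one (norm_guf u _)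

lemma Uop_Uop' (f : L2 d) : Uop u v hM (Uop' u v hM f) = f := by
  refine W_comp _ _ _ _ _ _ _ _ _ _ (phim_psim v hM) (fun x => ?_) f
  rw [guf', phim_psim v hM, mul_comm]
  exact star_mul_self_of_norm_one (norm_guf u _)


/-- `ξ ↦ Mᵀ(ξ - u)`. -/
def chim : Ed d → Ed d := fun ξ => Matrix.toEuclideanCLM (𝕜 := ℝ) Mᵀ (ξ - u)

/-- `ξ ↦ M⁻ᵀ ξ + u`. -/
def phit : Ed d → Ed d := fun ξ => Matrix.toEuclideanCLM (𝕜 := ℝ) (M⁻¹)ᵀ ξ + u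

/-- The character appearing in the conjugated Fourier side. -/
def gvf : Ed d → ℂ := fun ξ => 𝐞 (-⟪ξ - u, v⟫)

/-- Its inverse character. -/
def gvf' : Ed d → ℂ := fun ξ => star (gvf u v (phit (M := M) u ξ))

omit hM

lemma measurable_chim : Measurable (chim (M := M) u) :=
  (Matrix.toEuclideanCLM (𝕜 := ℝ) Mᵀ).continuous.measurable.comp
    (measurable_id.sub_const u)

lemma measurable_phit : Measurable (phit (M := M) u) :=
  ((Matrix.toEuclideanCLM (𝕜 := ℝ) (M⁻¹)ᵀ).continuous.measurable).add_const u

lemma continuous_gvf : Continuous (gvf (d := d) u v) :=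
  continuous_subtype_val.comp (Real.continuous_fourierChar.comp
    (((continuous_id.sub continuous_const).inner continuous_const).neg))

lemma measurable_gvf : Measurable (gvf (d := d) u v) := (continuous_gvf u v).measurable

lemma norm_gvf : ∀ x, ‖gvf (d := d) u v x‖ = 1 := fun x => by
  simp [gvf, Circle.norm_coe]

lemma measurable_gvf' : Measurable (gvf' (M := M) u v) :=
  continuous_star.measurable.comp
    ((measurable_gvf u v).comp ((measurable_phit (M := M) u)))

lemma norm_gvf' : ∀ x, ‖gvf' (M := M) u v x‖ = 1 := fun x => by
  rw [gvf', norm_star]; exact norm_gvf u v _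

include hM

lemma chim_phit : ∀ x, chim (M := M) u (phit (M := M) u x) = x := by
  intro x
  simp only [chim, phit, add_sub_cancel_right]
  rw [← ContinuousLinearMap.mul_apply, ← _root_.map_mul, ← Matrix.transpose_mul,
    Matrix.nonsing_inv_mul M hM, Matrix.transpose_one]
  simp [_root_.map_one]

lemma phit_chim : ∀ x, phit (M := M) u (chim (M := M) u x) = x := by
  intro x
  simp only [chim, phit]
  rw [← ContinuousLinearMap.mul_apply, ← _root_.map_mul, ← Matrix.transpose_mul,
    Matrix.mul_nonsing_inv M hM, Matrix.transpose_one]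
  simp [_root_.map_one]

lemma map_chim : Measure.map (chim (M := M) u) (volume : Measure (Ed d))
    = ENNReal.ofReal |M.det|⁻¹ • volume := by
  unfold chim
  have h := map_affine_sub (d := d) Mᵀ
    (by rw [Matrix.det_transpose]; exact det_ne hM) u
  rw [h, Matrix.det_transpose]

lemma map_phit : Measure.map (phit (M := M) u) (volume : Measure (Ed d))
    = ENNReal.ofReal |M.det| • volume := by
  unfold phit
  have h := map_affine_add (d := d) (M⁻¹)ᵀ (by
    rw [Matrix.det_transpose, Matrix.det_nonsing_inv, Ring.inverse_eq_inv']
    exact inv_ne_zero (det_ne hM)) u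
  rw [h, Matrix.det_transpose, Matrix.det_nonsing_inv, Ring.inverse_eq_inv', abs_inv,
    inv_inv]

/-- The base operator for the Fourier side. -/
def Vop0 : L2 d →L[ℂ] L2 d :=
  W (measurable_gvf u v) (norm_gvf u v) (measurable_chim (M := M) u)
    (cdetinv_ne_top (M := M)) (map_chim u hM)

/-- Its inverse. -/
def Vop0' : L2 d →L[ℂ] L2 d :=
  W (measurable_gvf' (M := M) u v) (norm_gvf' (M := M) u v)
    (measurable_phit (M := M) u) (cdet_ne_top (M := M)) (map_phit u hM)

lemma Vop0_coe (f : L2 d) :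
    ((Vop0 u v hM f : L2 d) : Ed d → ℂ)
      =ᵐ[volume] wfun (gvf u v) (chim (M := M) u) (f : Ed d → ℂ) :=
  W_coe _ _ _ _ _ f

lemma Vop0'_Vop0 (f : L2 d) : Vop0' u v hM (Vop0 u v hM f) = f := by
  refine W_comp _ _ _ _ _ _ _ _ _ _ (chim_phit u hM) (fun x => ?_) f
  rw [gvf']
  exact star_mul_self_of_norm_one (norm_gvf u v _)

lemma Vop0_Vop0' (f : L2 d) : Vop0 u v hM (Vop0' u v hM f) = f := by
  refine W_comp _ _ _ _ _ _ _ _ _ _ (phit_chim u hM) (fun x => ?_) f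
  rw [gvf', phit_chim u hM, mul_comm]
  exact star_mul_self_of_norm_one (norm_gvf u v _)

/-- The full conjugated operator on the Fourier side. -/
def Vop : L2 d →L[ℂ] L2 d := ((|M.det| : ℝ) : ℂ) • Vop0 u v hM


lemma exp_identity (ξ y : Ed d) :
    -⟪phim M v y, ξ⟫ + ⟪u, phim M v y⟫
      = -⟪ξ - u, v⟫ + -⟪y, chim (M := M) u ξ⟫ := by
  have h3 : ⟪Matrix.toEuclideanCLM (𝕜 := ℝ) M y, ξ - u⟫
      = ⟪y, Matrix.toEuclideanCLM (𝕜 := ℝ) Mᵀ (ξ - u)⟫ :=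
    inner_toEuclideanCLM M y (ξ - u)
  simp only [phim, chim]
  rw [real_inner_comm _ u, real_inner_comm v (ξ - u)]
  simp only [inner_sub_right, inner_add_left] at h3 ⊢
  linarith

lemma pointwise_identity (f : L2 d) (ξ y : Ed d) :
    ((𝐞 (-⟪phim M v y, ξ⟫) : Circle) : ℂ)
        * wfun (guf u) (psim M v) (f : Ed d → ℂ) (phim M v y)
      = gvf u v ξ * (((𝐞 (-⟪y, chim (M := M) u ξ⟫) : Circle) : ℂ) * (f : Ed d → ℂ) y) := by
  rw [wfun, psim_phim v hM]
  have h1 : ((𝐞 (-⟪phim M v y, ξ⟫) : Circle) : ℂ) * (guf u (phim M v y))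
      = ((𝐞 (-⟪phim M v y, ξ⟫ + ⟪u, phim M v y⟫) : Circle) : ℂ) := by
    rw [AddChar.map_add_eq_mul, Circle.coe_mul]; rfl
  have h2 : (gvf u v ξ) * ((𝐞 (-⟪y, chim (M := M) u ξ⟫) : Circle) : ℂ)
      = ((𝐞 (-⟪ξ - u, v⟫ + -⟪y, chim (M := M) u ξ⟫) : Circle) : ℂ) := by
    rw [AddChar.map_add_eq_mul, Circle.coe_mul]; rfl
  calc ((𝐞 (-⟪phim M v y, ξ⟫) : Circle) : ℂ) * (guf u (phim M v y) * (f : Ed d → ℂ) y)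
      = (((𝐞 (-⟪phim M v y, ξ⟫) : Circle) : ℂ) * guf u (phim M v y)) * (f : Ed d → ℂ) y := by
        ring
    _ = ((𝐞 (-⟪ξ - u, v⟫ + -⟪y, chim (M := M) u ξ⟫) : Circle) : ℂ) * (f : Ed d → ℂ) y := by
        rw [h1, exp_identity u v hM]
    _ = _ := by rw [← h2]; ring

lemma fourier_wfun (f : L2 d) (ξ : Ed d) :
    FourierTransform.fourier (wfun (guf u) (psim M v) (f : Ed d → ℂ)) ξ
      = ((|M.det| : ℝ) : ℂ)
          * (gvf u v ξ * FourierTransform.fourier ((f : Ed d → ℂ)) (chim (M := M) u ξ)) := by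
  rw [Real.fourier_eq, Real.fourier_eq]
  simp only [Circle.smul_def]
  have hφ := measurable_phim M v
  have hmapφ := map_phim v hM
  have hvol : (volume : Measure (Ed d))
      = ENNReal.ofReal |M.det| • Measure.map (phim M v) volume := by
    rw [hmapφ, smul_smul, ← ENNReal.ofReal_mul (abs_nonneg _),
      mul_inv_cancel₀ (abs_ne_zero.mpr (det_ne hM)), ENNReal.ofReal_one, one_smul]
  have haesm : AEStronglyMeasurable
      (fun x => ((𝐞 (-⟪x, ξ⟫) : Circle) : ℂ) * wfun (guf u) (psim M v) (f : Ed d → ℂ) x)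
      (Measure.map (phim M v) volume) := by
    refine AEStronglyMeasurable.mono_ac (hmapφ ▸ Measure.smul_absolutelyContinuous) ?_
    refine AEStronglyMeasurable.mul ?_
      (memL2_wfun (measurable_guf u) (norm_guf u) (measurable_psim M v)
        (cdet_ne_top (M := M)) (map_psim v hM) f).1
    exact (continuous_subtype_val.comp (Real.continuous_fourierChar.comp
      ((continuous_id.inner continuous_const).neg))).aestronglyMeasurable
  calc ∫ x, ((𝐞 (-⟪x, ξ⟫) : Circle) : ℂ) * wfun (guf u) (psim M v) (f : Ed d → ℂ) x
      = ∫ x, ((𝐞 (-⟪x, ξ⟫) : Circle) : ℂ) * wfun (guf u) (psim M v) (f : Ed d → ℂ) x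
          ∂(ENNReal.ofReal |M.det| • Measure.map (phim M v) volume) := by rw [← hvol]
    _ = |M.det| • ∫ x, ((𝐞 (-⟪x, ξ⟫) : Circle) : ℂ)
          * wfun (guf u) (psim M v) (f : Ed d → ℂ) x ∂(Measure.map (phim M v) volume) := by
        rw [integral_smul_measure, ENNReal.toReal_ofReal (abs_nonneg _)]
    _ = |M.det| • ∫ y, ((𝐞 (-⟪phim M v y, ξ⟫) : Circle) : ℂ)
          * wfun (guf u) (psim M v) (f : Ed d → ℂ) (phim M v y) := by
        rw [integral_map hφ.aemeasurable haesm]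
    _ = |M.det| • ∫ y, gvf u v ξ
          * (((𝐞 (-⟪y, chim (M := M) u ξ⟫) : Circle) : ℂ) * (f : Ed d → ℂ) y) := by
        congr 1
        exact integral_congr_ae (Eventually.of_forall fun y => pointwise_identity u v hM f ξ y)
    _ = ((|M.det| : ℝ) : ℂ) * (gvf u v ξ
          * ∫ y, ((𝐞 (-⟪y, chim (M := M) u ξ⟫) : Circle) : ℂ) * (f : Ed d → ℂ) y) := by
        rw [integral_const_mul, Complex.real_smul]


lemma integrable_wfun (f : L2 d) (hf : Integrable (f : Ed d → ℂ) volume) :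
    Integrable (wfun (guf u) (psim M v) (f : Ed d → ℂ)) volume := by
  have h0 : Integrable (f : Ed d → ℂ) (Measure.map (psim M v) volume) := by
    rw [map_psim v hM]
    exact hf.smul_measure (cdet_ne_top (M := M))
  have h1 := (integrable_map_measure (by
      rw [map_psim v hM]
      exact (Lp.stronglyMeasurable f).aestronglyMeasurable)
    (measurable_psim M v).aemeasurable).mp h0
  exact h1.bdd_mul ((measurable_guf u).stronglyMeasurable.aestronglyMeasurable)
    (Eventually.of_forall fun x => le_of_eq (norm_guf u x))

lemma FUf_eq_VFf (F : L2 d ≃ₗᵢ[ℂ] L2 d)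
    (hF : ∀ f : L2 d, Integrable f volume →
      (F f : Ed d → ℂ) =ᵐ[volume] FourierTransform.fourier (f : Ed d → ℂ))
    (f : L2 d) (hf : Integrable (f : Ed d → ℂ) volume) :
    F (Uop u v hM f) = Vop u v hM (F f) := by
  apply Lp.ext
  have hWcoe := Uop_coe u v hM f
  have hUint : Integrable ((Uop u v hM f : Ed d → ℂ)) volume :=
    (integrable_wfun u v hM f hf).congr hWcoe.symm
  have h1 := hF (Uop u v hM f) hUint
  have h2 : FourierTransform.fourier ((Uop u v hM f : Ed d → ℂ))
      = FourierTransform.fourier (wfun (guf u) (psim M v) (f : Ed d → ℂ)) := by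
    funext η
    rw [Real.fourier_eq, Real.fourier_eq]
    exact integral_congr_ae (hWcoe.mono fun x hx => by simp only [hx])
  have h3 : ((Vop u v hM (F f)) : Ed d → ℂ) =ᵐ[volume]
      fun x => ((|M.det| : ℝ) : ℂ) * ((Vop0 u v hM (F f) : Ed d → ℂ) x) := by
    have e1 : Vop u v hM (F f) = ((|M.det| : ℝ) : ℂ) • (Vop0 u v hM (F f)) := rfl
    rw [e1]
    filter_upwards [Lp.coeFn_smul (((|M.det| : ℝ) : ℂ)) (Vop0 u v hM (F f))] with x hx
    rw [hx]; simp
  have h4 := Vop0_coe u v hM (F f)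
  have h5 := (qmp (measurable_chim (M := M) u) (map_chim u hM)).ae_eq (hF f hf)
  filter_upwards [h1, h3, h4, h5] with ξ hx1 hx3 hx4 hx5
  simp only [Function.comp_apply] at hx5
  rw [hx1, h2, fourier_wfun u v hM f ξ, hx3, hx4, wfun, hx5]

lemma FU_eq_VF (F : L2 d ≃ₗᵢ[ℂ] L2 d)
    (hF : ∀ f : L2 d, Integrable f volume →
      (F f : Ed d → ℂ) =ᵐ[volume] FourierTransform.fourier (f : Ed d → ℂ)) :
    ∀ f : L2 d, F (Uop u v hM f) = Vop u v hM (F f) := by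
  refine Lp.induction (p := (2 : ℝ≥0∞)) (by norm_num)
    (fun f : L2 d => F (Uop u v hM f) = Vop u v hM (F f)) ?_ ?_ ?_
  · intro c s hs hμs
    refine FUf_eq_VFf u v hM F hF _ ?_
    have hint : Integrable (s.indicator fun _ => c) (volume : Measure (Ed d)) :=
      (integrable_indicator_iff hs).mpr (integrableOn_const hμs.ne)
    refine hint.congr ?_
    exact (by
      rw [Lp.simpleFunc.coe_indicatorConst]
      exact (indicatorConstLp_coeFn).symm)
  · intro f g hf hg hdisj hPf hPg
    rw [map_add, map_add, map_add, hPf, hPg, map_add]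
  · exact isClosed_eq (F.continuous.comp (Uop u v hM).continuous)
      ((Vop u v hM).continuous.comp F.continuous)


lemma mem_image_phim (X : Set (Ed d)) :
    ∀ x, x ∈ phim M v '' X ↔ psim M v x ∈ X := by
  intro x
  constructor
  · rintro ⟨a, ha, rfl⟩
    rw [psim_phim v hM]; exact ha
  · intro h
    exact ⟨psim M v x, h, phim_psim v hM x⟩

lemma mem_image_phit (X : Set (Ed d)) :
    ∀ x, x ∈ phit (M := M) u '' X ↔ chim (M := M) u x ∈ X := by
  intro x
  constructor
  · rintro ⟨a, ha, rfl⟩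
    rw [chim_phit u hM]; exact ha
  · intro h
    exact ⟨chim (M := M) u x, h, phit_chim u hM x⟩

lemma P_Uop (P : Set (Ed d) → (L2 d →L[ℂ] L2 d))
    (hP : ∀ (X : Set (Ed d)) (f : L2 d), (P X f : Ed d → ℂ) =ᵐ[volume] X.indicator f)
    (A : Set (Ed d)) (f : L2 d) :
    P (phim M v '' A) (Uop u v hM f) = Uop u v hM (P A f) :=
  W_comm_P _ _ _ _ _ P hP A _ (mem_image_phim v hM A) f

lemma P_Vop (P : Set (Ed d) → (L2 d →L[ℂ] L2 d))
    (hP : ∀ (X : Set (Ed d)) (f : L2 d), (P X f : Ed d → ℂ) =ᵐ[volume] X.indicator f)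
    (B : Set (Ed d)) (h : L2 d) :
    P (phit (M := M) u '' B) (Vop u v hM h) = Vop u v hM (P B h) := by
  have e1 : Vop u v hM h = ((|M.det| : ℝ) : ℂ) • Vop0 u v hM h := rfl
  have e2 : Vop u v hM (P B h) = ((|M.det| : ℝ) : ℂ) • Vop0 u v hM (P B h) := rfl
  rw [e1, e2, _root_.map_smul]
  congr 1
  exact W_comm_P _ _ _ _ _ P hP B _ (mem_image_phit u hM B) h

end Main

end AffInv

end Aux

set_option maxHeartbeats 1000000 in
/-- Invariance of the eigenvalues of the localization operator under affine changes of
variables: `λ_n(A, B) = λ_n(MA + v, M⁻ᵀB + u)` for any invertible matrix `M` and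
vectors `u, v`. -/
theorem eigenvalues_affine_invariance (d : ℕ)
    (P : Set (Ed d) → (L2 d →L[ℂ] L2 d))
    (hP : ∀ (X : Set (Ed d)) (f : L2 d), (P X f : Ed d → ℂ) =ᵐ[volume] X.indicator f)
    (F : L2 d ≃ₗᵢ[ℂ] L2 d)
    (hF : ∀ f : L2 d, Integrable f volume →
      (F f : Ed d → ℂ) =ᵐ[volume] FourierTransform.fourier (f : Ed d → ℂ))
    (A B : Set (Ed d)) (hA : volume A < ⊤) (hB : volume B < ⊤)
    (M : Matrix (Fin d) (Fin d) ℝ) (hM : IsUnit M.det) (u v : Ed d)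
    (l l' : ℕ → ℝ)
    (hl : IsEigenSeq
      (P A ∘L ↑F.symm.toContinuousLinearEquiv ∘L P B ∘L ↑F.toContinuousLinearEquiv ∘L P A) l)
    (hl' : IsEigenSeq
      (P ((fun x => Matrix.toEuclideanCLM (𝕜 := ℝ) M x + v) '' A) ∘L
        ↑F.symm.toContinuousLinearEquiv ∘L
          P ((fun x => Matrix.toEuclideanCLM (𝕜 := ℝ) (M⁻¹)ᵀ x + u) '' B) ∘L
            ↑F.toContinuousLinearEquiv ∘L
              P ((fun x => Matrix.toEuclideanCLM (𝕜 := ℝ) M x + v) '' A)) l') :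
    ∀ n, l n = l' n := by
  set T : L2 d →L[ℂ] L2 d :=
    P A ∘L ↑F.symm.toContinuousLinearEquiv ∘L P B ∘L ↑F.toContinuousLinearEquiv ∘L P A
    with hT
  set T' : L2 d →L[ℂ] L2 d :=
    P ((fun x => Matrix.toEuclideanCLM (𝕜 := ℝ) M x + v) '' A) ∘L
      ↑F.symm.toContinuousLinearEquiv ∘L
        P ((fun x => Matrix.toEuclideanCLM (𝕜 := ℝ) (M⁻¹)ᵀ x + u) '' B) ∘L
          ↑F.toContinuousLinearEquiv ∘L
            P ((fun x => Matrix.toEuclideanCLM (𝕜 := ℝ) M x + v) '' A)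
    with hT'
  obtain ⟨hl1, hl2, hl3, hl4⟩ := hl
  obtain ⟨hl'1, hl'2, hl'3, hl'4⟩ := hl'
  have hFU := AffInv.FU_eq_VF u v hM F hF
  have hinj : Function.Injective ⇑(AffInv.Uop u v hM) :=
    Function.LeftInverse.injective (AffInv.Uop'_Uop u v hM)
  have hUFsymm : ∀ h : L2 d,
      AffInv.Uop u v hM (F.symm h) = F.symm (AffInv.Vop u v hM h) := by
    intro h
    have h1 := hFU (F.symm h)
    rw [F.apply_symm_apply] at h1
    rw [← h1, F.symm_apply_apply]
  have hA' : ((fun x => Matrix.toEuclideanCLM (𝕜 := ℝ) M x + v) '' A)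
      = AffInv.phim M v '' A := rfl
  have hB' : ((fun x => Matrix.toEuclideanCLM (𝕜 := ℝ) (M⁻¹)ᵀ x + u) '' B)
      = AffInv.phit (M := M) u '' B := rfl
  have key : ∀ f : L2 d, T' (AffInv.Uop u v hM f) = AffInv.Uop u v hM (T f) := by
    intro f
    rw [hT, hT']
    simp only [ContinuousLinearMap.comp_apply, ContinuousLinearEquiv.coe_coe,
      LinearIsometryEquiv.coe_toContinuousLinearEquiv, hA', hB']
    rw [AffInv.P_Uop u v hM P hP A f, hFU, AffInv.P_Vop u v hM P hP B, ← hUFsymm,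
      AffInv.P_Uop u v hM P hP A]
  have heig : ∀ μ : ℂ,
      Module.End.eigenspace (T' : L2 d →ₗ[ℂ] L2 d) μ
        = Submodule.map ((AffInv.Uop u v hM : L2 d →L[ℂ] L2 d) : L2 d →ₗ[ℂ] L2 d)
            (Module.End.eigenspace (T : L2 d →ₗ[ℂ] L2 d) μ) := by
    intro μ
    ext x
    simp only [Module.End.mem_eigenspace_iff, Submodule.mem_map,
      ContinuousLinearMap.coe_coe]
    constructor
    · intro hx
      refine ⟨AffInv.Uop' u v hM x, ?_, AffInv.Uop_Uop' u v hM x⟩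
      apply hinj
      rw [← key (AffInv.Uop' u v hM x), AffInv.Uop_Uop' u v hM x, hx,
        _root_.map_smul, AffInv.Uop_Uop' u v hM x]
    · rintro ⟨y, hy, rfl⟩
      rw [key y, hy, _root_.map_smul]
  have hfin : ∀ μ : ℂ,
      Module.finrank ℂ ↥(Module.End.eigenspace (T' : L2 d →ₗ[ℂ] L2 d) μ)
        = Module.finrank ℂ ↥(Module.End.eigenspace (T : L2 d →ₗ[ℂ] L2 d) μ) := by
    intro μ
    rw [heig μ]
    exact (Submodule.equivMapOfInjective
      ((AffInv.Uop u v hM : L2 d →L[ℂ] L2 d) : L2 d →ₗ[ℂ] L2 d) hinj _).finrank_eq.symm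
  refine seq_unique l l' hl1 hl'1 hl2 hl'2 hl3 hl'3 (fun μ hμ => ?_)
  rw [hl4 μ hμ, hl'4 μ hμ]
  exact (hfin μ).symm
end
end

section
/- Let f: [0,1] → ℂ with lim_{x→0⁺} |f(x)|/x = ∞. Then there exist ε > 0 and a non-decreasing function g: [0,1] → [0,∞) with g(0) = 0, lim_{x→0⁺} g(x)/x = ∞, and g(x) ≤ |f(x)| for all 0 ≤ x ≤ ε. -/
open Filter Topology Set

/-- Subordination lemma: if `|f(x)|/x → ∞` as `x → 0⁺`, then there are `ε > 0` and a
non-decreasing function `g : [0,1] → [0,∞)` with `g(0) = 0`, `g(x)/x → ∞` as `x → 0⁺`,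
and `g(x) ≤ |f(x)|` for `0 ≤ x ≤ ε`. -/
theorem monotone_subordinate_function (f : ℝ → ℂ)
    (hf : Tendsto (fun x => ‖f x‖ / x) (nhdsWithin 0 (Set.Ioi 0)) atTop) :
    ∃ ε : ℝ, 0 < ε ∧ ∃ g : ℝ → ℝ,
      MonotoneOn g (Set.Icc 0 1) ∧
      g 0 = 0 ∧
      (∀ x ∈ Set.Icc (0:ℝ) 1, 0 ≤ g x) ∧
      Tendsto (fun x => g x / x) (nhdsWithin 0 (Set.Ioi 0)) atTop ∧
      ∀ x ∈ Set.Icc 0 ε, g x ≤ ‖f x‖ := by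
  -- choose ε with ‖f t‖ ≥ t on (0, ε]
  have h1 : {x : ℝ | (1:ℝ) ≤ ‖f x‖ / x} ∈ 𝓝[>] (0:ℝ) :=
    hf.eventually (eventually_ge_atTop 1)
  obtain ⟨ε, hε, hεs⟩ := mem_nhdsGT_iff_exists_Ioc_subset.mp h1
  have hε0 : (0:ℝ) < ε := hε
  have hfε : ∀ t, 0 < t → t ≤ ε → t ≤ ‖f t‖ := by
    intro t ht htε
    have := hεs ⟨ht, htε⟩
    have : (1:ℝ) ≤ ‖f t‖ / t := this
    calc t = 1 * t := (one_mul t).symm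
    _ ≤ (‖f t‖ / t) * t := by nlinarith
    _ = ‖f t‖ := by field_simp
  set g : ℝ → ℝ := fun x => if x ≤ 0 then 0 else sInf ((fun t => ‖f t‖) '' Icc (min x ε) ε)
    with hg
  have hne : ∀ x : ℝ, ((fun t => ‖f t‖) '' Icc (min x ε) ε).Nonempty :=
    fun x => (Set.nonempty_Icc.mpr (min_le_right _ _)).image _
  have hbdd : ∀ x : ℝ, BddBelow ((fun t => ‖f t‖) '' Icc (min x ε) ε) := by
    intro x
    refine ⟨0, ?_⟩
    rintro y ⟨t, _, rfl⟩
    exact norm_nonneg _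
  have hgpos : ∀ x : ℝ, 0 ≤ g x := by
    intro x
    simp only [hg]
    split
    · exact le_rfl
    · refine le_csInf (hne x) ?_
      rintro y ⟨t, _, rfl⟩
      exact norm_nonneg _
  have hgx : ∀ x : ℝ, 0 < x → g x = sInf ((fun t => ‖f t‖) '' Icc (min x ε) ε) := by
    intro x hx
    simp only [hg, if_neg (not_le.mpr hx)]
  refine ⟨ε, hε0, g, ?_, ?_, ?_, ?_, ?_⟩
  · -- MonotoneOn
    intro x hx y hy hxy
    rcases le_or_gt x 0 with hx0 | hx0
    · simp only [hg, if_pos hx0]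
      exact hgpos y
    · have hy0 : 0 < y := lt_of_lt_of_le hx0 hxy
      rw [hgx x hx0, hgx y hy0]
      refine csInf_le_csInf (hbdd x) (hne y) ?_
      exact Set.image_mono (Set.Icc_subset_Icc (min_le_min_right ε hxy) le_rfl)
  · simp [hg]
  · intro x _; exact hgpos x
  · -- tendsto
    rw [tendsto_atTop]
    intro M
    set M' : ℝ := max M 1 with hM'
    have hM'1 : (1:ℝ) ≤ M' := le_max_right _ _
    have hM'0 : (0:ℝ) < M' := lt_of_lt_of_le one_pos hM'1
    have h2 : {x : ℝ | M' ≤ ‖f x‖ / x} ∈ 𝓝[>] (0:ℝ) :=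
      hf.eventually (eventually_ge_atTop M')
    obtain ⟨δ₀, hδ₀, hδ₀s⟩ := mem_nhdsGT_iff_exists_Ioc_subset.mp h2
    set δ : ℝ := min δ₀ ε with hδdef
    have hδ0 : (0:ℝ) < δ := lt_min hδ₀ hε0
    have hδε : δ ≤ ε := min_le_right _ _
    have hδδ₀ : δ ≤ δ₀ := min_le_left _ _
    filter_upwards [Ioc_mem_nhdsGT_of_mem ⟨le_rfl, div_pos hδ0 hM'0⟩] with x hx
    obtain ⟨hx0, hxδM⟩ := hx
    have hxδ : x ≤ δ := hxδM.trans (by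
      calc δ / M' ≤ δ / 1 := by
            apply div_le_div_of_nonneg_left hδ0.le one_pos hM'1
      _ = δ := div_one δ)
    have hxε : x ≤ ε := hxδ.trans hδε
    have hmin : min x ε = x := min_eq_left hxε
    have key : M' * x ≤ g x := by
      rw [hgx x hx0, hmin]
      refine le_csInf ((Set.nonempty_Icc.mpr hxε).image _) ?_
      rintro y ⟨t, ⟨hxt, htε⟩, rfl⟩
      have ht0 : 0 < t := lt_of_lt_of_le hx0 hxt
      rcases le_or_gt t δ with htδ | htδ
      · have := hδ₀s ⟨ht0, htδ.trans hδδ₀⟩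
        have hft : M' ≤ ‖f t‖ / t := this
        calc M' * x ≤ M' * t := by nlinarith
        _ ≤ (‖f t‖ / t) * t := by nlinarith
        _ = ‖f t‖ := by field_simp
      · have hft := hfε t ht0 htε
        calc M' * x ≤ δ := by
              have : M' * x ≤ M' * (δ / M') := by nlinarith
              calc M' * x ≤ M' * (δ / M') := this
              _ = δ := by field_simp
        _ ≤ t := htδ.le
        _ ≤ ‖f t‖ := hft
    have : M ≤ g x / x := by
      rw [le_div_iff₀ hx0]
      calc M * x ≤ M' * x := by nlinarith [le_max_left M 1]
      _ ≤ g x := key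
    exact this
  · -- g ≤ ‖f‖ on [0, ε]
    intro x hx
    rcases le_or_gt x 0 with hx0 | hx0
    · simp only [hg, if_pos hx0]
      exact norm_nonneg _
    · rw [hgx x hx0, min_eq_left hx.2]
      exact csInf_le (hbdd x |>.mono (by rw [min_eq_left hx.2]))
        ⟨x, ⟨le_rfl, hx.2⟩, rfl⟩
end
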